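/- If f is a quadratic Boolean function on F_2^n given by f(x) = x U x^T + l(x) with U an upper triangular n×n matrix over F_2 with zero diagonal and l affine, then α(f) = 2^{n − rank(U + U^T)}, where the rank is taken over F_2. -/
import Mathlib

open Finset

/-- The vector space `F_2^n`. -/
abbrev V (n : ℕ) : Type := Fin n → ZMod 2

/-- The standard dot product on `F_2^n`. -/
def dotP {n : ℕ} (a x : V n) : ZMod 2 := ∑ i, a i * x i

/-- The Walsh transform of a Boolean function `f` on `F_2^n`. -/
def walsh {n : ℕ} (f : V n → ZMod 2) (a : V n) : ℤ :=
  ∑ x : V n, (-1 : ℤ) ^ ((f x + dotP a x).val)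

/-- The normalized fourth power moment of the Walsh transform. -/
noncomputable def alphaQ {n : ℕ} (f : V n → ZMod 2) : ℚ :=
  ((∑ u : V n, (walsh f u) ^ 4 : ℤ) : ℚ) / 2 ^ (3 * n)

/-! ### Auxiliary lemmas -/

def sgn (a : ZMod 2) : ℤ := (-1 : ℤ) ^ a.val

lemma sgn_add (a b : ZMod 2) : sgn (a + b) = sgn a * sgn b := by revert a b; decide

lemma sgn_sq (a : ZMod 2) : sgn a * sgn a = 1 := by revert a; decide

lemma dotP_comm {n : ℕ} (a x : V n) : dotP a x = dotP x a := by
  unfold dotP; exact Finset.sum_congr rfl fun i _ => mul_comm _ _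

lemma dotP_add_right {n : ℕ} (v a b : V n) : dotP v (a + b) = dotP v a + dotP v b := by
  unfold dotP; rw [← Finset.sum_add_distrib]
  exact Finset.sum_congr rfl fun i _ => by simp [mul_add]

lemma dotP_add_left {n : ℕ} (a b v : V n) : dotP (a + b) v = dotP a v + dotP b v := by
  rw [dotP_comm, dotP_add_right, dotP_comm v a, dotP_comm v b]

lemma dotP_single {n : ℕ} (v : V n) (i : Fin n) : dotP v (Pi.single i 1) = v i := by
  unfold dotP
  rw [Finset.sum_eq_single i]
  · simp
  · intro j _ hj; simp [Pi.single_apply, hj]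
  · simp

lemma char_sum {n : ℕ} (v : V n) :
    (∑ x : V n, sgn (dotP v x)) = if v = 0 then 2 ^ n else 0 := by
  split_ifs with h
  · subst h
    have : ∀ x : V n, dotP 0 x = 0 := by intro x; unfold dotP; simp
    simp only [this]
    simp [sgn, Fintype.card_fun]
  · obtain ⟨i, hi⟩ : ∃ i, v i ≠ 0 := by
      by_contra hc; push_neg at hc; exact h (funext hc)
    have hvi : v i = 1 := by
      have := hi; revert this; generalize v i = z; revert z; decide
    have hσ : (∑ x : V n, sgn (dotP v ((Equiv.addLeft (Pi.single i 1 : V n)) x)))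
        = ∑ x : V n, sgn (dotP v x) :=
      Equiv.sum_comp (Equiv.addLeft (Pi.single i 1 : V n)) (fun x => sgn (dotP v x))
    simp only [Equiv.coe_addLeft] at hσ
    have hneg : ∀ x : V n, sgn (dotP v (Pi.single i 1 + x)) = - sgn (dotP v x) := by
      intro x
      rw [dotP_add_right, sgn_add, dotP_single, hvi]
      simp [sgn, ZMod.val_one]
    rw [funext hneg] at hσ
    simp only [Finset.sum_neg_distrib] at hσ
    linarith [hσ]

lemma dotP_mulVec_transpose {n : ℕ} (a x : V n) (M : Matrix (Fin n) (Fin n) (ZMod 2)) :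
    dotP a (M.mulVec x) = dotP x (M.transpose.mulVec a) := by
  unfold dotP
  simp only [Matrix.mulVec, dotProduct, Finset.mul_sum, Matrix.transpose_apply]
  rw [Finset.sum_comm]
  exact Finset.sum_congr rfl fun i _ => Finset.sum_congr rfl fun j _ => by ring

lemma derivQ {n : ℕ} (U : Matrix (Fin n) (Fin n) (ZMod 2)) (c : V n) (d : ZMod 2)
    (f : V n → ZMod 2) (hf : ∀ x, f x = dotP x (U.mulVec x) + (dotP c x + d))
    (x a : V n) :
    f (x + a) = f x + (dotP x ((U + U.transpose).mulVec a)
      + (dotP a (U.mulVec a) + dotP c a)) := by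
  simp only [hf, Matrix.add_mulVec, Matrix.mulVec_add, dotP_add_right, dotP_add_left]
  rw [dotP_mulVec_transpose a x U]
  ring

/-- The coefficient function appearing in the squared Walsh transform. -/
def Tfun {n : ℕ} (U : Matrix (Fin n) (Fin n) (ZMod 2)) (c : V n) (a : V n) : ℤ :=
  (if (U + U.transpose).mulVec a = 0 then (2 : ℤ) ^ n else 0)
    * sgn (dotP a (U.mulVec a) + dotP c a)

lemma key5 (p w t1 t2 t3 : ZMod 2) :
    (p + w) + ((p + (t1 + t2)) + (w + t3)) = t1 + (t2 + t3) := by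
  revert p w t1 t2 t3; decide

lemma walsh_sq {n : ℕ} (U : Matrix (Fin n) (Fin n) (ZMod 2)) (c : V n) (d : ZMod 2)
    (f : V n → ZMod 2) (hf : ∀ x, f x = dotP x (U.mulVec x) + (dotP c x + d))
    (u : V n) :
    walsh f u ^ 2 = ∑ a : V n, Tfun U c a * sgn (dotP u a) := by
  have h1 : walsh f u = ∑ x : V n, sgn (f x + dotP u x) := rfl
  rw [h1, sq, Finset.sum_mul_sum]
  have inner : ∀ x : V n, (∑ y : V n, sgn (f x + dotP u x) * sgn (f y + dotP u y))
      = ∑ a : V n, sgn (dotP ((U + U.transpose).mulVec a) x)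
          * (sgn (dotP a (U.mulVec a) + dotP c a) * sgn (dotP u a)) := by
    intro x
    rw [← Equiv.sum_comp (Equiv.addLeft x)
      (fun y => sgn (f x + dotP u x) * sgn (f y + dotP u y))]
    refine Finset.sum_congr rfl fun a _ => ?_
    simp only [Equiv.coe_addLeft]
    rw [← sgn_add, derivQ U c d f hf x a, dotP_add_right u x a, key5, sgn_add, sgn_add,
      dotP_comm]
  simp only [inner]
  rw [Finset.sum_comm]
  refine Finset.sum_congr rfl fun a _ => ?_
  rw [← Finset.sum_mul, char_sum]
  unfold Tfun
  ring

lemma Tfun_mul_self {n : ℕ} (U : Matrix (Fin n) (Fin n) (ZMod 2)) (c : V n) (a : V n) :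
    Tfun U c a * Tfun U c a
      = if (U + U.transpose).mulVec a = 0 then (2 : ℤ) ^ (2 * n) else 0 := by
  unfold Tfun
  split_ifs with h
  · rw [mul_mul_mul_comm, sgn_sq, mul_one, two_mul, pow_add]
  · simp

lemma neg_eq_selfV {n : ℕ} (v : V n) : -v = v := by
  have h : ∀ z : ZMod 2, -z = z := by decide
  funext i
  rw [Pi.neg_apply, h]

lemma add_eq_zero_iffV {n : ℕ} (a b : V n) : a + b = 0 ↔ b = a := by
  rw [add_eq_zero_iff_eq_neg, neg_eq_selfV, eq_comm]

lemma sum_walsh_pow_four {n : ℕ} (U : Matrix (Fin n) (Fin n) (ZMod 2)) (c : V n) (d : ZMod 2)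
    (f : V n → ZMod 2) (hf : ∀ x, f x = dotP x (U.mulVec x) + (dotP c x + d)) :
    (∑ u : V n, walsh f u ^ 4)
      = 2 ^ (3 * n) *
        ((Finset.univ.filter (fun a : V n => (U + U.transpose).mulVec a = 0)).card : ℤ) := by
  classical
  have h4 : ∀ u : V n, walsh f u ^ 4 = (walsh f u ^ 2) ^ 2 := by intro u; ring
  simp only [h4, walsh_sq U c d f hf]
  have expand : ∀ u : V n,
      (∑ a : V n, Tfun U c a * sgn (dotP u a)) ^ 2
        = ∑ a : V n, ∑ b : V n, (Tfun U c a * Tfun U c b) * sgn (dotP (a + b) u) := by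
    intro u
    rw [sq, Finset.sum_mul_sum]
    refine Finset.sum_congr rfl fun a _ => Finset.sum_congr rfl fun b _ => ?_
    rw [dotP_comm (a + b) u, dotP_add_right, sgn_add]
    ring
  simp only [expand]
  rw [Finset.sum_comm]
  have step : ∀ a : V n,
      (∑ u : V n, ∑ b : V n, (Tfun U c a * Tfun U c b) * sgn (dotP (a + b) u))
        = (2 : ℤ) ^ n * (Tfun U c a * Tfun U c a) := by
    intro a
    rw [Finset.sum_comm]
    have inner : ∀ b : V n,
        (∑ u : V n, (Tfun U c a * Tfun U c b) * sgn (dotP (a + b) u))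
          = (Tfun U c a * Tfun U c b) * (if a + b = 0 then (2 : ℤ) ^ n else 0) := by
      intro b
      rw [← Finset.mul_sum, char_sum]
    simp only [inner]
    rw [Finset.sum_eq_single a]
    · rw [if_pos ((add_eq_zero_iffV a a).mpr rfl)]; ring
    · intro b _ hb
      rw [if_neg, mul_zero]
      rw [add_eq_zero_iffV]
      exact hb
    · intro h
      exact absurd (Finset.mem_univ a) h
  simp only [step, Tfun_mul_self]
  rw [← Finset.mul_sum, ← Finset.sum_filter, Finset.sum_const, nsmul_eq_mul]
  ring_nf

lemma card_ker {n : ℕ} (B : Matrix (Fin n) (Fin n) (ZMod 2)) :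
    (Finset.univ.filter (fun a : V n => B.mulVec a = 0)).card = 2 ^ (n - B.rank) := by
  classical
  have e : {a : V n // B.mulVec a = 0} ≃ LinearMap.ker B.mulVecLin :=
    Equiv.subtypeEquivRight (by intro x; simp [LinearMap.mem_ker, Matrix.mulVecLin_apply])
  letI : Fintype (LinearMap.ker B.mulVecLin) := Fintype.ofEquiv _ e
  have h1 : (Finset.univ.filter (fun a : V n => B.mulVec a = 0)).card
      = Fintype.card (LinearMap.ker B.mulVecLin) := by
    rw [← Fintype.card_congr e, Fintype.card_subtype]
  have h2 : Fintype.card (LinearMap.ker B.mulVecLin)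
      = 2 ^ Module.finrank (ZMod 2) (LinearMap.ker B.mulVecLin) := by
    have := Module.card_eq_pow_finrank (K := ZMod 2) (V := LinearMap.ker B.mulVecLin)
    rwa [ZMod.card] at this
  have h3 : B.rank + Module.finrank (ZMod 2) (LinearMap.ker B.mulVecLin) = n := by
    have := LinearMap.finrank_range_add_finrank_ker (B.mulVecLin)
    rw [Module.finrank_fin_fun] at this
    exact this
  rw [h1, h2]
  congr 1
  omega

/-- If `f(x) = x U xᵀ + l(x)` with `U` upper triangular with zero diagonal and `l` affine,
then `α(f) = 2^(n - rank(U + Uᵀ))`. -/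
theorem alpha_of_quadratic {n : ℕ} (U : Matrix (Fin n) (Fin n) (ZMod 2))
    (hU : ∀ i j, j ≤ i → U i j = 0) (c : V n) (d : ZMod 2)
    (f : V n → ZMod 2) (hf : ∀ x, f x = dotP x (U.mulVec x) + (dotP c x + d)) :
    alphaQ f = 2 ^ (n - (U + U.transpose).rank) := by
  classical
  unfold alphaQ
  rw [sum_walsh_pow_four U c d f hf, card_ker (U + U.transpose)]
  push_cast
  exact mul_div_cancel_left₀ _ (by positivity)
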